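/- In a concrete evaluation (G_α)_{α∈addr(t)} of a tree t into G where t/α = (t/α1) ⊕_{τ,τ'} (t/α2), the node sets of G_{α1} and G_{α2} are disjoint, and no node of G_{α2} is reachable in G from the ports of G_{α1} (and symmetrically). -/

import Mathlib

structure LGraph (ν Ld Lb : Type) where
  V : Set ν
  E : Set (ν × Lb × ν)
  lab : ν → Ld
  port : List ν

def LGraph.IsEmptyGraph {ν Ld Lb : Type} (G : LGraph ν Ld Lb) : Prop :=
  G.V = ∅ ∧ G.E = ∅ ∧ G.port = []

def CloneWitness {ν Ld Lb : Type} (G : LGraph ν Ld Lb) (C : Set ν) (Cv : ν → Set ν)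
    (G' : LGraph ν Ld Lb) : Prop :=
  (∀ v, v ∈ G.V → v ∉ C → Cv v = {v}) ∧
  (∀ u v, u ∈ G.V → v ∈ G.V → u ≠ v → Disjoint (Cv u) (Cv v)) ∧
  G'.V = (⋃ v ∈ G.V, Cv v) ∧
  G'.E = {e | ∃ u ℓ w, (u, ℓ, w) ∈ G.E ∧ e.1 ∈ Cv u ∧ e.2.1 = ℓ ∧ e.2.2 ∈ Cv w} ∧
  (∀ v, v ∈ G.V → ∀ v' ∈ Cv v, G'.lab v' = G.lab v) ∧
  G'.port = G.port

def Clone {ν Ld Lb : Type} (G : LGraph ν Ld Lb) (C : Set ν) : Set (LGraph ν Ld Lb) :=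
  {G' | ∃ Cv, CloneWitness G C Cv G'}

structure ExpOp (ν Ld Lb : Type) where
  V : Set ν
  E : Set (ν × Lb × ν)
  lab : ν → Ld
  port : List ν
  dock : List ν
  C : Set ν
  E_sub : ∀ e ∈ E, e.1 ∈ V ∧ e.2.2 ∈ V
  port_nodup : port.Nodup
  dock_nodup : dock.Nodup
  port_sub : ∀ v ∈ port, v ∈ V
  dock_sub : ∀ v ∈ dock, v ∈ V
  C_sub : C ⊆ V \ ({v | v ∈ port} ∪ {v | v ∈ dock})

namespace ExpOp
variable {ν Ld Lb : Type}

def und (Φ : ExpOp ν Ld Lb) : LGraph ν Ld Lb := ⟨Φ.V, Φ.E, Φ.lab, Φ.port⟩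

def NEW (Φ : ExpOp ν Ld Lb) : Set ν := {v | v ∈ Φ.port} \ {v | v ∈ Φ.dock}

def CONT (Φ : ExpOp ν Ld Lb) : Set ν := Φ.V \ ({v | v ∈ Φ.port} ∪ {v | v ∈ Φ.dock})

/-- (R1): every edge source lies in NEW. -/
def R1 (Φ : ExpOp ν Ld Lb) : Prop := ∀ e ∈ Φ.E, e.1 ∈ Φ.NEW

/-- (R2): every dock node that is not a port is the target of some edge. -/
def R2 (Φ : ExpOp ν Ld Lb) : Prop := ∀ v ∈ Φ.dock, v ∉ Φ.port → ∃ e ∈ Φ.E, e.2.2 = v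

/-- (R3): no isolated context nodes. -/
def R3 (Φ : ExpOp ν Ld Lb) : Prop := ∀ v ∈ Φ.V, v ∉ Φ.port → ∃ e ∈ Φ.E, e.2.2 = v

end ExpOp

def Apply {ν Ld Lb : Type} (Φ : ExpOp ν Ld Lb) (G H : LGraph ν Ld Lb) : Prop :=
  G.port.length = Φ.dock.length ∧
  ∃ (Cv : ν → Set ν) (G'' : LGraph ν Ld Lb) (μ : ν → ν),
    CloneWitness Φ.und Φ.C Cv G'' ∧
    Set.InjOn μ G''.V ∧
    (∀ v ∈ Φ.NEW, μ v ∉ G.V) ∧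
    Φ.dock.map μ = G.port ∧
    (∀ v ∈ Φ.CONT, ∀ v' ∈ Cv v, μ v' ∈ G.V ∧ μ v' ∉ {x | x ∈ G.port} ∧
      G.lab (μ v') = Φ.lab v) ∧
    H.V = G.V ∪ μ '' G''.V ∧
    H.E = G.E ∪ {e | ∃ e' ∈ G''.E, e = (μ e'.1, e'.2.1, μ e'.2.2)} ∧
    (∀ v ∈ G.V, H.lab v = G.lab v) ∧
    (∀ v' ∈ G''.V, μ v' ∉ G.V → H.lab (μ v') = G''.lab v') ∧
    H.port = G''.port.map μ

def UnionOf {ν Ld Lb : Type} (G₁ G₂ H : LGraph ν Ld Lb) : Prop :=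
  Disjoint G₁.V G₂.V ∧
  H.V = G₁.V ∪ G₂.V ∧
  H.E = G₁.E ∪ G₂.E ∧
  (∀ v ∈ G₁.V, H.lab v = G₁.lab v) ∧
  (∀ v ∈ G₂.V, H.lab v = G₂.lab v) ∧
  H.port = G₁.port ++ G₂.port

def Subgraph {ν Ld Lb : Type} (G' G : LGraph ν Ld Lb) : Prop :=
  G'.V ⊆ G.V ∧ G'.E ⊆ G.E ∧ (∀ v ∈ G'.V, G'.lab v = G.lab v)

def LGraph.step {ν Ld Lb : Type} (G : LGraph ν Ld Lb) (u v : ν) : Prop :=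
  ∃ ℓ, (u, ℓ, v) ∈ G.E

/-- Nodes reachable in `G` by directed paths from the nodes occurring in `p`. -/
def LGraph.reachSet {ν Ld Lb : Type} (G : LGraph ν Ld Lb) (p : List ν) : Set ν :=
  {v | ∃ u ∈ p, Relation.ReflTransGen G.step u v}

/-- `G↓p`: the subgraph of `G` induced by the nodes reachable from `p`, with port sequence `p`. -/
def LGraph.restrictReach {ν Ld Lb : Type} (G : LGraph ν Ld Lb) (p : List ν) : LGraph ν Ld Lb :=
  ⟨G.reachSet p, {e | e ∈ G.E ∧ e.1 ∈ G.reachSet p ∧ e.2.2 ∈ G.reachSet p}, G.lab, p⟩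

inductive OpTree (ν Ld Lb : Type) : Type where
  | phi : OpTree ν Ld Lb
  | ext : ExpOp ν Ld Lb → OpTree ν Ld Lb → OpTree ν Ld Lb
  | union : OpTree ν Ld Lb → OpTree ν Ld Lb → OpTree ν Ld Lb

namespace OpTree
variable {ν Ld Lb : Type}

def subtree : OpTree ν Ld Lb → List ℕ → Option (OpTree ν Ld Lb)
  | t, [] => some t
  | .ext _ t, 1 :: α => t.subtree α
  | .union t₁ _, 1 :: α => t₁.subtree α
  | .union _ t₂, 2 :: α => t₂.subtree α
  | _, _ => none

def Addr (t : OpTree ν Ld Lb) (α : List ℕ) : Prop := (t.subtree α).isSome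

def ops : OpTree ν Ld Lb → Set (ExpOp ν Ld Lb)
  | .phi => ∅
  | .ext Φ t => insert Φ t.ops
  | .union t₁ t₂ => t₁.ops ∪ t₂.ops

end OpTree

/-- A concrete evaluation of the tree `t` into the graph `G`: a family of subgraphs of `G`
(indexed by Gorn addresses, with no renaming of nodes) with `ev [] = G`, respecting the
operations labelling `t`. -/
def ConcreteEval {ν Ld Lb : Type} (t : OpTree ν Ld Lb) (G : LGraph ν Ld Lb)
    (ev : List ℕ → LGraph ν Ld Lb) : Prop :=
  ev [] = G ∧
  ∀ α, t.Addr α →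
    Subgraph (ev α) G ∧
    (t.subtree α = some .phi → (ev α).IsEmptyGraph) ∧
    (∀ Φ t', t.subtree α = some (.ext Φ t') → Apply Φ (ev (α ++ [1])) (ev α)) ∧
    (∀ t₁ t₂, t.subtree α = some (.union t₁ t₂) →
      UnionOf (ev (α ++ [1])) (ev (α ++ [2])) (ev α))

/-!
Every graph `G_α` of a concrete evaluation is closed under outgoing edges of `G`: an edge of `G`
leaving a node of `G_α` is an edge of `G_α`. This goes down the tree from `G_ε = G`. At a
union address the edges of the other argument start in the other, disjoint, node set. At an
extension address the edges added by `Φ` start at images of NEW nodes (R1), which are fresh,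
so they do not start in the argument. Since ports are nodes and edges stay inside the node
set, everything reachable in `G` from the ports of `G_α` is a node of `G_α`, and disjointness
of the two union arguments finishes the proof.
-/

namespace OpTree

variable {ν Ld Lb : Type}

theorem subtree_append (t : OpTree ν Ld Lb) (α β : List ℕ) :
    t.subtree (α ++ β) = (t.subtree α).bind (·.subtree β) := by
  induction α generalizing t with
  | nil => simp [subtree]
  | cons a α ih =>
    rcases t with _ | ⟨Φ, r⟩ | ⟨r₁, r₂⟩ <;> rcases a with _ | _ | _ | a <;>
      simp [subtree, ih]

theorem ops_subset_of_subtree_eq_some {t s : OpTree ν Ld Lb} {α : List ℕ}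
    (h : t.subtree α = some s) : s.ops ⊆ t.ops := by
  induction α generalizing t with
  | nil => simp only [subtree, Option.some.injEq] at h; exact h ▸ subset_rfl
  | cons a α ih =>
    rcases t with _ | ⟨Φ, r⟩ | ⟨r₁, r₂⟩ <;> rcases a with _ | _ | _ | a <;>
      simp [subtree] at h
    · exact (ih h).trans (Set.subset_insert _ _)
    · exact (ih h).trans Set.subset_union_left
    · exact (ih h).trans Set.subset_union_right

theorem addr_of_subtree_eq_some {t s : OpTree ν Ld Lb} {α : List ℕ}
    (h : t.subtree α = some s) : t.Addr α := by
  simp [Addr, h]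

theorem subtree_eq_some_of_append_singleton {t s' : OpTree ν Ld Lb} {β : List ℕ} {a : ℕ}
    (h : t.subtree (β ++ [a]) = some s') :
    (∃ Φ, t.subtree β = some (.ext Φ s') ∧ a = 1) ∨
    (∃ r, t.subtree β = some (.union s' r) ∧ a = 1) ∨
    (∃ r, t.subtree β = some (.union r s') ∧ a = 2) := by
  rw [subtree_append] at h
  obtain ⟨s, hβ, ha⟩ := Option.bind_eq_some_iff.mp h
  rcases s with _ | ⟨Φ, r⟩ | ⟨r₁, r₂⟩ <;> rcases a with _ | _ | _ | a <;>
    simp_all [subtree]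

section Children

variable {t s s₁ s₂ : OpTree ν Ld Lb} {α : List ℕ}

theorem subtree_ext_child {Φ : ExpOp ν Ld Lb} (h : t.subtree α = some (.ext Φ s)) :
    t.subtree (α ++ [1]) = some s := by
  simp [subtree_append, h, subtree]

theorem subtree_union_left (h : t.subtree α = some (.union s₁ s₂)) :
    t.subtree (α ++ [1]) = some s₁ := by
  simp [subtree_append, h, subtree]

theorem subtree_union_right (h : t.subtree α = some (.union s₁ s₂)) :
    t.subtree (α ++ [2]) = some s₂ := by
  simp [subtree_append, h, subtree]

end Children

end OpTree

namespace LGraph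

variable {ν Ld Lb : Type}

structure WellFormed (H : LGraph ν Ld Lb) : Prop where
  port_sub : ∀ v ∈ H.port, v ∈ H.V
  E_sub : ∀ e ∈ H.E, e.1 ∈ H.V ∧ e.2.2 ∈ H.V

def OutClosedIn (H G : LGraph ν Ld Lb) : Prop :=
  ∀ e ∈ G.E, e.1 ∈ H.V → e ∈ H.E

theorem reachSet_subset_of_outClosedIn {H G : LGraph ν Ld Lb} (hH : H.WellFormed)
    (hclosed : H.OutClosedIn G) : G.reachSet H.port ⊆ H.V := by
  rintro v ⟨u, hu, hpath⟩
  induction hpath with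
  | refl => exact hH.port_sub u hu
  | tail _ hstep ih =>
    obtain ⟨ℓ, he⟩ := hstep
    exact (hH.E_sub _ (hclosed _ he ih)).2

theorem OutClosedIn.of_edges_subset {K A G : LGraph ν Ld Lb} {F : Set (ν × Lb × ν)}
    (hK : K.OutClosedIn G) (hV : A.V ⊆ K.V) (hE : K.E ⊆ A.E ∪ F)
    (hF : ∀ e ∈ F, e.1 ∉ A.V) : A.OutClosedIn G := fun e he hsrc =>
  (hE (hK e he (hV hsrc))).resolve_right fun heF => hF e heF hsrc

theorem IsEmptyGraph.wellFormed {H : LGraph ν Ld Lb} (h : H.IsEmptyGraph) : H.WellFormed := by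
  obtain ⟨-, hE, hport⟩ := h
  exact ⟨by simp [hport], by simp [hE]⟩

end LGraph

section Operations

variable {ν Ld Lb : Type}

theorem CloneWitness.eq_singleton_of_mem_port {Φ : ExpOp ν Ld Lb} {Cv : ν → Set ν}
    {G'' : LGraph ν Ld Lb} (hCW : CloneWitness Φ.und Φ.C Cv G'') {v : ν} (hv : v ∈ Φ.port) :
    Cv v = {v} :=
  hCW.1 v (Φ.port_sub v hv) fun hC => (Φ.C_sub hC).2 (Or.inl hv)

theorem CloneWitness.wellFormed {Φ : ExpOp ν Ld Lb} {Cv : ν → Set ν} {G'' : LGraph ν Ld Lb}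
    (hCW : CloneWitness Φ.und Φ.C Cv G'') : G''.WellFormed := by
  have hsingle := @hCW.eq_singleton_of_mem_port
  obtain ⟨-, -, hV, hE, -, hport⟩ := hCW
  constructor
  · intro v hv
    rw [hport] at hv
    rw [hV]
    exact Set.mem_biUnion (Φ.port_sub v hv) (by rw [hsingle hv]; rfl)
  · rw [hE]
    rintro e ⟨u, ℓ, w, huw, hu, -, hw⟩
    rw [hV]
    exact ⟨Set.mem_biUnion (Φ.E_sub _ huw).1 hu, Set.mem_biUnion (Φ.E_sub _ huw).2 hw⟩

theorem Apply.wellFormed {Φ : ExpOp ν Ld Lb} {G₁ H : LGraph ν Ld Lb} (hA : Apply Φ G₁ H)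
    (h₁ : G₁.WellFormed) : H.WellFormed := by
  obtain ⟨-, Cv, G'', μ, hCW, -, -, -, -, hV, hE, -, -, hport⟩ := hA
  have h'' := hCW.wellFormed
  constructor <;> rw [hV]
  · rw [hport]
    rintro _ hv
    obtain ⟨w, hw, rfl⟩ := List.mem_map.mp hv
    exact Or.inr ⟨w, h''.port_sub w hw, rfl⟩
  · rw [hE]
    rintro e (he | ⟨e', he', rfl⟩)
    · exact ⟨Or.inl (h₁.E_sub e he).1, Or.inl (h₁.E_sub e he).2⟩
    · exact ⟨Or.inr ⟨e'.1, (h''.E_sub e' he').1, rfl⟩, Or.inr ⟨e'.2.2, (h''.E_sub e' he').2, rfl⟩⟩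

/-- Every edge added by an operation satisfying (R1) starts at the image of a NEW node, which
is not a node of the argument graph. -/
theorem Apply.outClosedIn {Φ : ExpOp ν Ld Lb} {G₁ H G : LGraph ν Ld Lb} (hR1 : Φ.R1)
    (hA : Apply Φ G₁ H) (hH : H.OutClosedIn G) : G₁.OutClosedIn G := by
  obtain ⟨-, Cv, G'', μ, hCW, -, hfresh, -, -, hV, hE, -, -, -⟩ := hA
  have hsingle := @hCW.eq_singleton_of_mem_port
  obtain ⟨-, -, -, hE'', -, -⟩ := hCW
  refine hH.of_edges_subset (hV ▸ Set.subset_union_left) hE.subset ?_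
  rintro _ ⟨e', he', rfl⟩
  rw [hE''] at he'
  obtain ⟨u, ℓ, w, huw, hu, -, -⟩ := he'
  have hnew : u ∈ Φ.NEW := hR1 _ huw
  rw [hsingle hnew.1, Set.mem_singleton_iff] at hu
  rw [hu]
  exact hfresh u hnew

theorem UnionOf.wellFormed {G₁ G₂ H : LGraph ν Ld Lb} (hU : UnionOf G₁ G₂ H)
    (h₁ : G₁.WellFormed) (h₂ : G₂.WellFormed) : H.WellFormed := by
  obtain ⟨-, hV, hE, -, -, hport⟩ := hU
  constructor <;> rw [hV]
  · rw [hport]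
    intro v hv
    rcases List.mem_append.mp hv with hv | hv
    · exact Or.inl (h₁.port_sub v hv)
    · exact Or.inr (h₂.port_sub v hv)
  · rw [hE]
    rintro e (he | he)
    · exact ⟨Or.inl (h₁.E_sub e he).1, Or.inl (h₁.E_sub e he).2⟩
    · exact ⟨Or.inr (h₂.E_sub e he).1, Or.inr (h₂.E_sub e he).2⟩

theorem UnionOf.outClosedIn_left {G₁ G₂ H G : LGraph ν Ld Lb} (hU : UnionOf G₁ G₂ H)
    (h₂ : G₂.WellFormed) (hH : H.OutClosedIn G) : G₁.OutClosedIn G := by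
  obtain ⟨hD, hV, hE, -, -, -⟩ := hU
  exact hH.of_edges_subset (hV ▸ Set.subset_union_left) hE.subset fun e he =>
    Set.disjoint_right.mp hD (h₂.E_sub e he).1

theorem UnionOf.outClosedIn_right {G₁ G₂ H G : LGraph ν Ld Lb} (hU : UnionOf G₁ G₂ H)
    (h₁ : G₁.WellFormed) (hH : H.OutClosedIn G) : G₂.OutClosedIn G := by
  obtain ⟨hD, hV, hE, -, -, -⟩ := hU
  exact hH.of_edges_subset (hV ▸ Set.subset_union_right) (hE ▸ Set.union_comm _ _).subset
    fun e he => Set.disjoint_left.mp hD (h₁.E_sub e he).1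

end Operations

namespace ConcreteEval

variable {ν Ld Lb : Type} {t : OpTree ν Ld Lb} {G : LGraph ν Ld Lb}
  {ev : List ℕ → LGraph ν Ld Lb} {α : List ℕ}

theorem isEmptyGraph (h : ConcreteEval t G ev) (hα : t.subtree α = some .phi) :
    (ev α).IsEmptyGraph :=
  (h.2 α (OpTree.addr_of_subtree_eq_some hα)).2.1 hα

theorem apply {Φ : ExpOp ν Ld Lb} {s : OpTree ν Ld Lb} (h : ConcreteEval t G ev)
    (hα : t.subtree α = some (.ext Φ s)) : Apply Φ (ev (α ++ [1])) (ev α) :=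
  (h.2 α (OpTree.addr_of_subtree_eq_some hα)).2.2.1 Φ s hα

theorem unionOf {s₁ s₂ : OpTree ν Ld Lb} (h : ConcreteEval t G ev)
    (hα : t.subtree α = some (.union s₁ s₂)) :
    UnionOf (ev (α ++ [1])) (ev (α ++ [2])) (ev α) :=
  (h.2 α (OpTree.addr_of_subtree_eq_some hα)).2.2.2 s₁ s₂ hα

theorem wellFormed (h : ConcreteEval t G ev) {s : OpTree ν Ld Lb} :
    ∀ {α}, t.subtree α = some s → (ev α).WellFormed := by
  induction s with
  | phi => exact fun hα => (h.isEmptyGraph hα).wellFormed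
  | ext Φ s ih => exact fun hα => (h.apply hα).wellFormed (ih (OpTree.subtree_ext_child hα))
  | union s₁ s₂ ih₁ ih₂ =>
    exact fun hα => (h.unionOf hα).wellFormed (ih₁ (OpTree.subtree_union_left hα))
      (ih₂ (OpTree.subtree_union_right hα))

theorem outClosedIn (h : ConcreteEval t G ev) (hR1 : ∀ Φ ∈ t.ops, Φ.R1) {s : OpTree ν Ld Lb} :
    t.subtree α = some s → (ev α).OutClosedIn G := by
  induction α using List.reverseRec generalizing s with
  | nil => exact fun _ e he _ => h.1 ▸ he
  | append_singleton β a ih =>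
    intro hα
    rcases OpTree.subtree_eq_some_of_append_singleton hα with
      ⟨Φ, hβ, rfl⟩ | ⟨r, hβ, rfl⟩ | ⟨r, hβ, rfl⟩
    · have hΦ : Φ ∈ t.ops := OpTree.ops_subset_of_subtree_eq_some hβ (Set.mem_insert _ _)
      exact (h.apply hβ).outClosedIn (hR1 Φ hΦ) (ih hβ)
    · exact (h.unionOf hβ).outClosedIn_left (h.wellFormed (OpTree.subtree_union_right hβ))
        (ih hβ)
    · exact (h.unionOf hβ).outClosedIn_right (h.wellFormed (OpTree.subtree_union_left hβ))
        (ih hβ)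

theorem reachSet_port_subset (h : ConcreteEval t G ev) (hR1 : ∀ Φ ∈ t.ops, Φ.R1)
    {s : OpTree ν Ld Lb} (hα : t.subtree α = some s) : G.reachSet (ev α).port ⊆ (ev α).V :=
  LGraph.reachSet_subset_of_outClosedIn (h.wellFormed hα) (h.outClosedIn hR1 hα)

end ConcreteEval

/-- at a union address of a concrete evaluation of `t` into `G`, the node
sets of the two argument graphs are disjoint and no node of either is reachable in `G`
from the ports of the other. -/
theorem union_arguments_separated {ν Ld Lb : Type} (t : OpTree ν Ld Lb)
    (G : LGraph ν Ld Lb) (ev : List ℕ → LGraph ν Ld Lb)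
    (hops : ∀ Φ ∈ t.ops, Φ.R1 ∧ Φ.R2)
    (h : ConcreteEval t G ev) :
    ∀ α t₁ t₂, t.subtree α = some (.union t₁ t₂) →
      Disjoint (ev (α ++ [1])).V (ev (α ++ [2])).V ∧
      (∀ v ∈ (ev (α ++ [2])).V, v ∉ G.reachSet (ev (α ++ [1])).port) ∧
      (∀ v ∈ (ev (α ++ [1])).V, v ∉ G.reachSet (ev (α ++ [2])).port) := by
  intro α t₁ t₂ hα
  have hR1 : ∀ Φ ∈ t.ops, Φ.R1 := fun Φ hΦ => (hops Φ hΦ).1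
  have hD := (h.unionOf hα).1
  have reach₁ := h.reachSet_port_subset hR1 (OpTree.subtree_union_left hα)
  have reach₂ := h.reachSet_port_subset hR1 (OpTree.subtree_union_right hα)
  exact ⟨hD, fun v hv hr => Set.disjoint_left.mp hD (reach₁ hr) hv,
    fun v hv hr => Set.disjoint_right.mp hD (reach₂ hr) hv⟩
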